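/- arXiv:1211.2780 — 2 statements merged into one kernel-verified Lean document; each statement's English description precedes it below -/
import Mathlib

section
/- Let (Yᵢ)_{i≥1} be identically distributed real random variables such that E[exp(λ|Y₁|^µ)] < ∞ for some λ > 0 and µ > 0. Then for every p ≥ 1, E[max_{1≤i≤n} |Yᵢ|^p] = O((ln n)^{p/µ}) as n → ∞; that is, there exists a constant C > 0 such that E[max_{1≤i≤n} |Yᵢ|^p] ≤ C (ln n)^{p/µ} for all n ≥ 2. -/
open MeasureTheory ProbabilityTheory Real

/-!
Write q = p / µ and Zᵢ = |Yᵢ|^µ, so that |Yᵢ|^p = Zᵢ^q, and cut each Zᵢ at the level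
A = (log n) / λ. Below A we have Zᵢ^q ≤ A^q; above it, with c = (q / (λ e))^q coming from
log y ≤ y - 1, (Zᵢ - A)^q ≤ c e^{λ (Zᵢ - A)} = (c / n) e^{λ Zᵢ}.
Bounding the maximum of the exponential terms by their sum, the n equal expectations
E[e^{λ |Yᵢ|^µ}] cancel the factor 1 / n, which leaves E[max |Yᵢ|^p] ≤ 2^q ((log n / λ)^q + c E[e^{λ |Y₁|^µ}]).
-/

namespace Real

lemma add_rpow_le_two_rpow_mul_rpow_add_rpow {a b q : ℝ} (ha : 0 ≤ a) (hb : 0 ≤ b) (hq : 0 ≤ q) :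
    (a + b) ^ q ≤ 2 ^ q * (a ^ q + b ^ q) := calc
  (a + b) ^ q ≤ (2 * max a b) ^ q := by rw [two_mul]; gcongr <;> simp
  _ = 2 ^ q * max a b ^ q := mul_rpow zero_le_two (ha.trans (le_max_left a b))
  _ ≤ 2 ^ q * (a ^ q + b ^ q) := by
    gcongr
    rcases max_cases a b with ⟨h, -⟩ | ⟨h, -⟩ <;> rw [h]
    · exact le_add_of_nonneg_right (rpow_nonneg hb q)
    · exact le_add_of_nonneg_left (rpow_nonneg ha q)

lemma rpow_le_mul_exp {q lam x : ℝ} (hq : 0 < q) (hlam : 0 < lam) (hx : 0 ≤ x) :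
    x ^ q ≤ (q / (lam * exp 1)) ^ q * exp (lam * x) := by
  rcases hx.eq_or_lt with rfl | hx
  · rw [zero_rpow hq.ne']; positivity
  have hy : 0 < lam * x / q := by positivity
  have hy_pow : (lam * x / q) ^ q ≤ exp (lam * x - q) := by
    rw [rpow_def_of_pos hy, exp_le_exp]
    have hlog := mul_le_mul_of_nonneg_left (log_le_sub_one_of_pos hy) hq.le
    have : q * (lam * x / q - 1) = lam * x - q := by field_simp
    linarith
  calc x ^ q = (lam * x / q) ^ q * (q / lam) ^ q := by
        rw [← mul_rpow hy.le (by positivity)]; congr 1; field_simp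
    _ ≤ exp (lam * x - q) * (q / lam) ^ q := by gcongr
    _ = (q / (lam * exp 1)) ^ q * exp (lam * x) := by
        rw [div_mul_eq_div_div, div_rpow (by positivity) (exp_pos 1).le, ← exp_mul, one_mul,
          exp_sub]
        field_simp

lemma rpow_le_two_rpow_mul_add_exp {q lam z A : ℝ} (hq : 0 < q) (hlam : 0 < lam)
    (hz : 0 ≤ z) (hA : 0 ≤ A) :
    z ^ q ≤ 2 ^ q * (A ^ q + (q / (lam * exp 1)) ^ q * exp (lam * (z - A))) := by
  rcases le_total z A with hzA | hAz
  · have : 0 ≤ (q / (lam * exp 1)) ^ q * exp (lam * (z - A)) := by positivity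
    calc z ^ q ≤ A ^ q := by gcongr
      _ ≤ 1 * (A ^ q + (q / (lam * exp 1)) ^ q * exp (lam * (z - A))) := by linarith
      _ ≤ _ := by gcongr; exact one_le_rpow one_le_two hq.le
  · calc z ^ q = (A + (z - A)) ^ q := by ring_nf
      _ ≤ 2 ^ q * (A ^ q + (z - A) ^ q) :=
        add_rpow_le_two_rpow_mul_rpow_add_rpow hA (sub_nonneg.2 hAz) hq.le
      _ ≤ _ := by gcongr; exact rpow_le_mul_exp hq hlam (sub_nonneg.2 hAz)

end Real

lemma biSup_rpow_le_sum_exp {ι : Type*} (s : Finset ι) {z : ι → ℝ} (hz : ∀ i ∈ s, 0 ≤ z i)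
    {q lam A : ℝ} (hq : 0 < q) (hlam : 0 < lam) (hA : 0 ≤ A) :
    ⨆ i ∈ s, z i ^ q ≤
      2 ^ q * (A ^ q + (q / (lam * exp 1)) ^ q * exp (-(lam * A)) * ∑ i ∈ s, exp (lam * z i)) := by
  have hbound : 0 ≤ 2 ^ q * (A ^ q +
      (q / (lam * exp 1)) ^ q * exp (-(lam * A)) * ∑ i ∈ s, exp (lam * z i)) := by positivity
  refine Real.iSup_le (fun i => Real.iSup_le (fun hi => ?_) hbound) hbound
  calc z i ^ q ≤ 2 ^ q * (A ^ q + (q / (lam * exp 1)) ^ q * exp (lam * (z i - A))) :=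
        rpow_le_two_rpow_mul_add_exp hq hlam (hz i hi) hA
    _ = 2 ^ q * (A ^ q + (q / (lam * exp 1)) ^ q * exp (-(lam * A)) * exp (lam * z i)) := by
        rw [mul_sub, sub_eq_neg_add, exp_add]; ring
    _ ≤ _ := by
        gcongr
        exact Finset.single_le_sum (f := fun j => exp (lam * z j)) (fun j _ => (exp_pos _).le) hi

lemma integral_biSup_abs_rpow_le {Ω ι : Type*} {mΩ : MeasurableSpace Ω} {μ : Measure Ω}
    [IsProbabilityMeasure μ] (s : Finset ι) {Y : ι → Ω → ℝ} {X : Ω → ℝ}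
    (hident : ∀ i ∈ s, IdentDistrib (Y i) X μ μ) {lam mu : ℝ}
    (hexp : Integrable (fun ω => exp (lam * |X ω| ^ mu)) μ) {p q A : ℝ} (hq : 0 < q)
    (hlam : 0 < lam) (hpq : p = mu * q) (hA : 0 ≤ A) :
    ∫ ω, ⨆ i ∈ s, |Y i ω| ^ p ∂μ ≤ 2 ^ q * (A ^ q + (q / (lam * exp 1)) ^ q * exp (-(lam * A)) *
      ((s.card : ℝ) * ∫ ω, exp (lam * |X ω| ^ mu) ∂μ)) := by
  have hW : ∀ i ∈ s, IdentDistrib (fun ω => exp (lam * |Y i ω| ^ mu))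
      (fun ω => exp (lam * |X ω| ^ mu)) μ μ := fun i hi => (hident i hi).comp (u := fun x => exp (lam * |x| ^ mu)) (by fun_prop)
  have hW_int : ∀ i ∈ s, Integrable (fun ω => exp (lam * |Y i ω| ^ mu)) μ :=
    fun i hi => (hW i hi).integrable_iff.2 hexp
  have hsum_int : Integrable (fun ω => ∑ i ∈ s, exp (lam * |Y i ω| ^ mu)) μ :=
    integrable_finsetSum s hW_int
  calc ∫ ω, ⨆ i ∈ s, |Y i ω| ^ p ∂μ
      ≤ ∫ ω, 2 ^ q * (A ^ q + (q / (lam * exp 1)) ^ q * exp (-(lam * A)) *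
          ∑ i ∈ s, exp (lam * |Y i ω| ^ mu)) ∂μ := by
        refine integral_mono_of_nonneg (ae_of_all _ fun ω => ?_)
          (((integrable_const _).add (hsum_int.const_mul _)).const_mul _) (ae_of_all _ fun ω => ?_)
        · exact Real.iSup_nonneg fun i => Real.iSup_nonneg fun _ => by positivity
        · simp_rw [hpq, rpow_mul (abs_nonneg _)]
          exact biSup_rpow_le_sum_exp s (fun i _ => by positivity) hq hlam hA
    _ = _ := by
        rw [integral_const_mul, integral_add (integrable_const _) (hsum_int.const_mul _),
          integral_const_mul, integral_finsetSum s hW_int,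
          Finset.sum_congr rfl fun i hi => (hW i hi).integral_eq]
        simp

theorem stmt_18_general
    {Ω : Type*} {mΩ : MeasurableSpace Ω} (μ : Measure Ω) [IsProbabilityMeasure μ]
    (Y : ℕ → Ω → ℝ)
    (hident : ∀ i, 1 ≤ i → IdentDistrib (Y i) (Y 1) μ μ)
    (lam mu : ℝ) (hlam : 0 < lam) (hmu : 0 < mu)
    (hexp : Integrable (fun ω => Real.exp (lam * |Y 1 ω| ^ mu)) μ)
    (p : ℝ) (hp : 1 ≤ p)
    :
    ∃ C > (0:ℝ), ∀ n : ℕ, 2 ≤ n →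
      (∫ ω, (⨆ i ∈ Finset.Icc 1 n, |Y i ω| ^ p) ∂μ) ≤ C * (Real.log n) ^ (p / mu) := by
  set q := p / mu
  have hq : 0 < q := div_pos (by linarith) hmu
  set K := ∫ ω, exp (lam * |Y 1 ω| ^ mu) ∂μ
  set c := (q / (lam * exp 1)) ^ q
  have hK : 0 ≤ K := by positivity
  have hlog2 : 0 < log 2 := log_pos one_lt_two
  refine ⟨2 ^ q / lam ^ q + 2 ^ q * c * K / log 2 ^ q, by positivity, fun n hn => ?_⟩
  have hn2 : (2 : ℝ) ≤ n := by exact_mod_cast hn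
  have hlog : log 2 ≤ log n := log_le_log two_pos hn2
  have hn_exp : exp (-(lam * (log n / lam))) * ((Finset.Icc 1 n).card * K) = K := by
    rw [mul_div_cancel₀ _ hlam.ne', exp_neg, exp_log (by linarith), Nat.card_Icc,
      add_tsub_cancel_right]
    field_simp
  calc ∫ ω, ⨆ i ∈ Finset.Icc 1 n, |Y i ω| ^ p ∂μ
      ≤ 2 ^ q * ((log n / lam) ^ q + c * exp (-(lam * (log n / lam))) *
          ((Finset.Icc 1 n).card * K)) :=
        integral_biSup_abs_rpow_le _ (fun i hi => hident i (Finset.mem_Icc.1 hi).1) hexp hq hlam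
          (mul_div_cancel₀ p hmu.ne').symm (by positivity)
    _ = 2 ^ q / lam ^ q * log n ^ q + 2 ^ q * c * K / log 2 ^ q * log 2 ^ q := by
        rw [mul_assoc c, hn_exp, div_rpow (by positivity) hlam.le]
        field_simp
    _ ≤ (2 ^ q / lam ^ q + 2 ^ q * c * K / log 2 ^ q) * log n ^ q := by
        rw [add_mul]; gcongr

theorem stmt_18
    {Ω : Type*} {mΩ : MeasurableSpace Ω} (μ : Measure Ω) [IsProbabilityMeasure μ]
    (Y : ℕ → Ω → ℝ) (hYmeas : ∀ i, Measurable (Y i))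
    (hident : ∀ i, 1 ≤ i → IdentDistrib (Y i) (Y 1) μ μ)
    (lam mu : ℝ) (hlam : 0 < lam) (hmu : 0 < mu)
    (hexp : Integrable (fun ω => Real.exp (lam * |Y 1 ω| ^ mu)) μ)
    (p : ℝ) (hp : 1 ≤ p)
    :
    ∃ C > (0:ℝ), ∀ n : ℕ, 2 ≤ n →
      (∫ ω, (⨆ i ∈ Finset.Icc 1 n, |Y i ω| ^ p) ∂μ) ≤ C * (Real.log n) ^ (p / mu) :=
  stmt_18_general (mΩ := mΩ) μ Y hident lam mu hlam hmu hexp p hp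
end

section
/- Under assumption (H5), with b_n = (δ ln n)^{1/µ} for any fixed δ > 2/λ, the truncation is asymptotically negligible at the iterated-logarithm rate: almost surely, [n F(h_n)/ln ln n]^{1/2} · |φ_n^[ℓ](χ) − φ̃_n^[ℓ](χ)| → 0 as n → ∞. -/
/-!
Truncation changes the estimator only through the indices `i ≤ n` with `|Yᵢ| > bₙ`. By Markov's
inequality applied to `exp (λ |Y|^µ)`, `P(|Yᵢ| > bᵢ) ≤ C exp (-λ bᵢ^µ) = C i^(-λδ)`, which is summable
since `λδ > 1`; by Borel–Cantelli, almost surely `|Yᵢ| ≤ bᵢ` for all large `i`. As `bₙ` increases to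
infinity, it eventually dominates also the finitely many remaining `|Yᵢ|`, so almost surely the two
estimators coincide for all large `n`, whatever the normalising factor.
-/

open MeasureTheory ProbabilityTheory Filter Real

lemma eventually_forall_le_of_eventually_le {a b : ℕ → ℝ} (hb : Monotone b)
    (hbt : Tendsto b atTop atTop) (ha : ∀ᶠ i in atTop, a i ≤ b i) :
    ∀ᶠ n in atTop, ∀ i ≤ n, a i ≤ b n := by
  obtain ⟨N, hN⟩ := eventually_atTop.mp ha
  filter_upwards [hbt.eventually_ge_atTop (∑ j ∈ Finset.range N, |a j|)] with n hn i hin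
  rcases lt_or_ge i N with hi | hi
  · calc a i ≤ |a i| := le_abs_self _
      _ ≤ ∑ j ∈ Finset.range N, |a j| :=
        Finset.single_le_sum (fun j _ => abs_nonneg (a j)) (Finset.mem_range.mpr hi)
      _ ≤ b n := hn
  · exact (hN i hi).trans (hb hin)

section LogTruncation

variable {δ mu : ℝ}

lemma monotone_rpow_mul_log (hδ : 0 ≤ δ) (hmu : 0 ≤ mu) :
    Monotone fun n : ℕ => (δ * log n) ^ (1 / mu) := by
  intro m n hmn
  have hlog : log m ≤ log n := by
    rcases Nat.eq_zero_or_pos m with rfl | hm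
    · simpa using log_natCast_nonneg n
    · exact log_le_log (by exact_mod_cast hm) (by exact_mod_cast hmn)
  have := log_natCast_nonneg m
  dsimp only
  gcongr

lemma tendsto_rpow_mul_log (hδ : 0 < δ) (hmu : 0 < mu) :
    Tendsto (fun n : ℕ => (δ * log n) ^ (1 / mu)) atTop atTop :=
  (tendsto_rpow_atTop (by positivity)).comp
    ((tendsto_log_atTop.comp tendsto_natCast_atTop_atTop).const_mul_atTop hδ)

lemma exp_mul_rpow_mul_log {n : ℕ} (hn : n ≠ 0) (hδ : 0 ≤ δ) (hmu : mu ≠ 0) (lam : ℝ) :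
    exp (lam * ((δ * log n) ^ (1 / mu)) ^ mu) = (n : ℝ) ^ (lam * δ) := by
  have := log_natCast_nonneg n
  rw [← rpow_mul (by positivity), one_div_mul_cancel hmu, rpow_one,
    rpow_def_of_pos (by positivity)]
  ring_nf

end LogTruncation

section BorelCantelli

variable {Ω : Type*} {mΩ : MeasurableSpace Ω} {μ : Measure Ω} [IsFiniteMeasure μ]

lemma measureReal_lt_abs_le_integral_exp_div {Z : Ω → ℝ} {lam mu t : ℝ} (hlam : 0 ≤ lam)
    (hmu : 0 ≤ mu) (ht : 0 ≤ t) (hint : Integrable (fun ω => exp (lam * |Z ω| ^ mu)) μ) :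
    μ.real {ω | t < |Z ω|} ≤ (∫ ω, exp (lam * |Z ω| ^ mu) ∂μ) / exp (lam * t ^ mu) := by
  have hsub : {ω | t < |Z ω|} ⊆ {ω | exp (lam * t ^ mu) ≤ exp (lam * |Z ω| ^ mu)} :=
    fun ω hω => by
      simp only [Set.mem_ofPred_eq, exp_le_exp]
      gcongr
      exact hω.le
  rw [le_div_iff₀ (exp_pos _), mul_comm]
  calc exp (lam * t ^ mu) * μ.real {ω | t < |Z ω|}
      ≤ exp (lam * t ^ mu) * μ.real {ω | exp (lam * t ^ mu) ≤ exp (lam * |Z ω| ^ mu)} :=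
        mul_le_mul_of_nonneg_left (measureReal_mono hsub) (exp_pos _).le
    _ ≤ ∫ ω, exp (lam * |Z ω| ^ mu) ∂μ :=
        mul_meas_ge_le_integral_of_nonneg (ae_of_all _ fun ω => (exp_pos _).le) hint _

lemma tsum_measure_ne_top_of_eventually_measureReal_le {s : ℕ → Set Ω} {g : ℕ → ℝ}
    (hg : Summable g) (hle : ∀ᶠ i in atTop, μ.real (s i) ≤ g i) : ∑' i, μ (s i) ≠ ⊤ := by
  have hsum : Summable fun i => μ.real (s i) :=
    hg.of_norm_bounded_eventually_nat (by
      filter_upwards [hle] with i hi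
      rwa [Real.norm_of_nonneg measureReal_nonneg])
  have hreal : ∀ i, μ (s i) = ENNReal.ofReal (μ.real (s i)) := fun i =>
    (ofReal_measureReal (measure_ne_top μ _)).symm
  simp_rw [hreal]
  rw [← ENNReal.ofReal_tsum_of_nonneg (fun _ => measureReal_nonneg) hsum]
  exact ENNReal.ofReal_ne_top

theorem ae_eventually_forall_abs_le_rpow_mul_log {Y : ℕ → Ω → ℝ}
    (hident : ∀ i, 1 ≤ i → IdentDistrib (Y i) (Y 1) μ μ) {lam mu δ : ℝ} (hlam : 0 < lam)
    (hmu : 0 < mu) (hexp : Integrable (fun ω => exp (lam * |Y 1 ω| ^ mu)) μ)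
    (hδ : 1 < lam * δ) :
    ∀ᵐ ω ∂μ, ∀ᶠ n in atTop, ∀ i ≤ n, |Y i ω| ≤ (δ * log n) ^ (1 / mu) := by
  have hδ0 : 0 < δ := pos_of_mul_pos_right (by linarith) hlam.le
  set b : ℕ → ℝ := fun n => (δ * log n) ^ (1 / mu)
  set C := ∫ ω, exp (lam * |Y 1 ω| ^ mu) ∂μ
  have hexp_meas : Measurable fun y : ℝ => exp (lam * |y| ^ mu) := by fun_prop
  have hbound : ∀ᶠ i in atTop, μ.real {ω | b i < |Y i ω|} ≤ C * (i : ℝ) ^ (-(lam * δ)) := by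
    filter_upwards [eventually_ge_atTop 1] with i hi
    have hid : IdentDistrib (fun ω => exp (lam * |Y i ω| ^ mu))
        (fun ω => exp (lam * |Y 1 ω| ^ mu)) μ μ := (hident i hi).comp hexp_meas
    calc μ.real {ω | b i < |Y i ω|}
        ≤ (∫ ω, exp (lam * |Y i ω| ^ mu) ∂μ) / exp (lam * b i ^ mu) :=
          measureReal_lt_abs_le_integral_exp_div hlam.le hmu.le (by positivity)
            (hid.integrable_iff.mpr hexp)
      _ = C * (i : ℝ) ^ (-(lam * δ)) := by
          rw [hid.integral_eq, exp_mul_rpow_mul_log (by omega) hδ0.le hmu.ne', rpow_neg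
            (Nat.cast_nonneg i), div_eq_mul_inv]
  have hsum := tsum_measure_ne_top_of_eventually_measureReal_le
    ((summable_nat_rpow.mpr (by linarith)).mul_left C) hbound
  filter_upwards [ae_eventually_notMem hsum] with ω hω
  exact eventually_forall_le_of_eventually_le (monotone_rpow_mul_log hδ0.le hmu.le)
    (tendsto_rpow_mul_log hδ0 hmu) (hω.mono fun i hi => not_lt.mp hi)

end BorelCantelli

theorem stmt_19_general
    {Ω : Type*} {mΩ : MeasurableSpace Ω} (μ : Measure Ω) [IsProbabilityMeasure μ]
    {E : Type*} [AddCommGroup E] [Module ℝ E] [MeasurableSpace E]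
    (nrm : Seminorm ℝ E) (χ : E)
    (X : ℕ → Ω → E) (Y : ℕ → Ω → ℝ)
    (hident : ∀ i, 1 ≤ i →
      IdentDistrib (fun ω => (X i ω, Y i ω)) (fun ω => (X 1 ω, Y 1 ω)) μ μ)
    (F : ℝ → ℝ) (h : ℕ → ℝ) (ℓ : ℝ) (K : ℝ → ℝ)
    (φn : ℕ → Ω → ℝ)
    (hφn : ∀ n ω, φn n ω =
      (∑ i ∈ Finset.Icc 1 n, Y i ω * (F (h i)) ^ (-ℓ) * K (nrm (χ - X i ω) / h i)) /
      ∑ i ∈ Finset.Icc 1 n, (F (h i)) ^ ((1:ℝ) - ℓ))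
    (lam mu : ℝ) (hlam : 0 < lam) (hmu : 0 < mu)
    (hexp : Integrable (fun ω => Real.exp (lam * |Y 1 ω| ^ mu)) μ)
    (δ : ℝ) (hδ : 2 / lam < δ)
    (b : ℕ → ℝ) (hb : ∀ n, b n = (δ * Real.log n) ^ (1 / mu))
    (φt : ℕ → Ω → ℝ)
    (hφt : ∀ n ω, φt n ω =
      (∑ i ∈ Finset.Icc 1 n,
        (Y i ω * Set.indicator {y : ℝ | |y| ≤ b n} (fun _ => (1:ℝ)) (Y i ω)) *
          (F (h i)) ^ (-ℓ) * K (nrm (χ - X i ω) / h i)) /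
      ∑ i ∈ Finset.Icc 1 n, (F (h i)) ^ ((1:ℝ) - ℓ))
    :
    ∀ᵐ ω ∂μ,
      Tendsto (fun n : ℕ =>
          Real.sqrt ((n : ℝ) * F (h n) / Real.log (Real.log n)) * |φn n ω - φt n ω|)
        atTop (nhds 0) := by
  have hlamδ : 1 < lam * δ := by
    have := (div_lt_iff₀ hlam).mp hδ
    linarith
  filter_upwards [ae_eventually_forall_abs_le_rpow_mul_log
    (fun i hi => (hident i hi).comp measurable_snd) hlam hmu hexp hlamδ] with ω hω
  refine tendsto_const_nhds.congr' ?_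
  filter_upwards [hω] with n hn
  have htrunc : φt n ω = φn n ω := by
    rw [hφn, hφt]
    refine congrArg (· / _) (Finset.sum_congr rfl fun i hi => ?_)
    have hYi : Y i ω ∈ {y : ℝ | |y| ≤ b n} := by
      rw [Set.mem_ofPred_eq, hb]
      exact hn i (Finset.mem_Icc.mp hi).2
    rw [Set.indicator_of_mem hYi, mul_one]
  rw [htrunc, sub_self, abs_zero, mul_zero]

theorem stmt_19
    {Ω : Type*} {mΩ : MeasurableSpace Ω} (μ : Measure Ω) [IsProbabilityMeasure μ]
    {E : Type*} [AddCommGroup E] [Module ℝ E] [MeasurableSpace E]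
    (nrm : Seminorm ℝ E) (χ : E)
    (X : ℕ → Ω → E) (Y : ℕ → Ω → ℝ)
    (hXmeas : ∀ i, Measurable (X i)) (hYmeas : ∀ i, Measurable (Y i))
    (hindep : iIndepFun (fun i ω => (X i ω, Y i ω)) μ)
    (hident : ∀ i, 1 ≤ i →
      IdentDistrib (fun ω => (X i ω, Y i ω)) (fun ω => (X 1 ω, Y 1 ω)) μ μ)
    (r : E → ℝ) (hrmeas : Measurable r)
    (σ2 : E → ℝ) (hσ2meas : Measurable σ2) (hσ2nonneg : ∀ x, 0 ≤ σ2 x)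
    (ε : ℕ → Ω → ℝ) (hmodel : ∀ i ω, Y i ω = r (X i ω) + ε i ω)
    (hcond0 : ∀ i, μ[ε i | MeasurableSpace.comap (X i) inferInstance] =ᵐ[μ] 0)
    (hcond2 : ∀ i, μ[(fun ω => (ε i ω)^2) | MeasurableSpace.comap (X i) inferInstance]
        =ᵐ[μ] (fun ω => σ2 (X i ω)))
    (F : ℝ → ℝ) (hFdef : ∀ t, F t = (μ {ω | nrm (χ - X 1 ω) ≤ t}).toReal)
    (h : ℕ → ℝ) (hhpos : ∀ i, 0 < h i) (hFpos : ∀ i, 0 < F (h i))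
    (ℓ : ℝ) (hℓmem : ℓ ∈ Set.Icc (0:ℝ) 1)
    (K : ℝ → ℝ)
    (hKnonneg : ∀ t, 0 ≤ K t) (hKbdd : ∃ C, ∀ t, K t ≤ C)
    (hKsupp : ∀ t, t ∉ Set.Icc (0:ℝ) 1 → K t = 0)
    (φn : ℕ → Ω → ℝ)
    (hφn : ∀ n ω, φn n ω =
      (∑ i ∈ Finset.Icc 1 n, Y i ω * (F (h i)) ^ (-ℓ) * K (nrm (χ - X i ω) / h i)) /
      ∑ i ∈ Finset.Icc 1 n, (F (h i)) ^ ((1:ℝ) - ℓ))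
    (lam mu : ℝ) (hlam : 0 < lam) (hmu : 0 < mu)
    (hexp : Integrable (fun ω => Real.exp (lam * |Y 1 ω| ^ mu)) μ)
    (δ : ℝ) (hδ : 2 / lam < δ)
    (b : ℕ → ℝ) (hb : ∀ n, b n = (δ * Real.log n) ^ (1 / mu))
    (φt : ℕ → Ω → ℝ)
    (hφt : ∀ n ω, φt n ω =
      (∑ i ∈ Finset.Icc 1 n,
        (Y i ω * Set.indicator {y : ℝ | |y| ≤ b n} (fun _ => (1:ℝ)) (Y i ω)) *
          (F (h i)) ^ (-ℓ) * K (nrm (χ - X i ω) / h i)) /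
      ∑ i ∈ Finset.Icc 1 n, (F (h i)) ^ ((1:ℝ) - ℓ))
    :
    ∀ᵐ ω ∂μ,
      Tendsto (fun n : ℕ =>
          Real.sqrt ((n : ℝ) * F (h n) / Real.log (Real.log n)) * |φn n ω - φt n ω|)
        atTop (nhds 0) :=
  stmt_19_general (mΩ := mΩ) μ nrm χ X Y hident F h ℓ K φn hφn lam mu hlam hmu hexp δ hδ b hb φt hφt
end
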